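/- Let R be an LM-system. Then f(s1,…,sn) →*_R f(t1,…,tn) if and only if si →*_R ti for every i ∈ {1,…,n}. In particular, any rewrite sequence between two terms with the same root symbol contains no root rewrite step. -/

import Mathlib

/-! Basic first-order terms, positions, substitutions and rewriting. -/

inductive Term (F : Type) : Type
  | var : Nat → Term F
  | app : F → List (Term F) → Term F

namespace Term

def subst {F : Type} (σ : Nat → Term F) : Term F → Term F
  | var n => σ n
  | app f ts => app f (ts.attach.map fun ⟨t, _⟩ => t.subst σ)

def root {F : Type} : Term F → Option F
  | var _ => none
  | app f _ => some f

def label {F : Type} : Term F → F ⊕ Nat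
  | var n => Sum.inr n
  | app f _ => Sum.inl f

def IsVar {F : Type} : Term F → Prop
  | var _ => True
  | app _ _ => False

def varsL {F : Type} : Term F → List Nat
  | var n => [n]
  | app _ ts => (ts.attach.map fun ⟨t, _⟩ => t.varsL).flatten

end Term

abbrev Rule (F : Type) := Term F × Term F
abbrev TRS (F : Type) := Set (Rule F)

/-- `SubtermAt t p u` : the subterm of `t` at position `p` is `u`. -/
inductive SubtermAt {F : Type} : Term F → List Nat → Term F → Prop
  | here (t : Term F) : SubtermAt t [] t
  | there {f : F} {ts : List (Term F)} {i : Nat} {u : Term F} {p : List Nat} {v : Term F} :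
      ts[i]? = some u → SubtermAt u p v → SubtermAt (Term.app f ts) (i :: p) v

/-- `ReplaceAt t p v t'` : replacing the subterm of `t` at position `p` by `v` yields `t'`. -/
inductive ReplaceAt {F : Type} : Term F → List Nat → Term F → Term F → Prop
  | here (t u : Term F) : ReplaceAt t [] u u
  | there {f : F} {ts : List (Term F)} {i : Nat} {u : Term F} {p : List Nat} {v w : Term F} :
      ts[i]? = some u → ReplaceAt u p v w →
      ReplaceAt (Term.app f ts) (i :: p) v (Term.app f (ts.set i w))

variable {F : Type}

/-- One rewrite step using the given rule (at some position, with some substitution). -/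
def RuleStep (ρ : Rule F) (s t : Term F) : Prop :=
  ∃ (σ : Nat → Term F) (p : List Nat),
    SubtermAt s p (ρ.1.subst σ) ∧ ReplaceAt s p (ρ.2.subst σ) t

def OneStep (R : TRS F) (s t : Term F) : Prop := ∃ ρ ∈ R, RuleStep ρ s t

/-- A rewrite step at the root position. -/
def RootStep (R : TRS F) (s t : Term F) : Prop :=
  ∃ ρ ∈ R, ∃ σ : Nat → Term F, s = ρ.1.subst σ ∧ t = ρ.2.subst σ

def StarRW (R : TRS F) : Term F → Term F → Prop := Relation.ReflTransGen (OneStep R)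
def Plus (R : TRS F) : Term F → Term F → Prop := Relation.TransGen (OneStep R)
/-- Convertibility (the congruence / equational theory generated by `R`). -/
def Conv (R : TRS F) : Term F → Term F → Prop := Relation.EqvGen (OneStep R)
def Joinable (R : TRS F) (s t : Term F) : Prop := ∃ u, StarRW R s u ∧ StarRW R t u
def NormalForm (R : TRS F) (t : Term F) : Prop := ∀ u, ¬ OneStep R t u
/-- `t` is the `R`-normal form of `s`. -/
def NFof (R : TRS F) (s t : Term F) : Prop := StarRW R s t ∧ NormalForm R t
def Terminating (R : TRS F) : Prop := WellFounded (fun a b : Term F => OneStep R b a)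
def Confluent (R : TRS F) : Prop := ∀ s t u, StarRW R s t → StarRW R s u → Joinable R t u
def Convergent (R : TRS F) : Prop := Confluent R ∧ Terminating R

/-- every proper subterm is irreducible -/
def EpsIrreducible (R : TRS F) (t : Term F) : Prop :=
  ∀ p u, SubtermAt t p u → p ≠ [] → NormalForm R u

def InnermostRedex (R : TRS F) (t : Term F) : Prop :=
  EpsIrreducible R t ∧ ¬ NormalForm R t

/-- Forward-closed, via the one-step-to-normal-form characterization. -/
def FCclosed (R : TRS F) : Prop :=
  ∀ t, InnermostRedex R t → ∀ u, NFof R t u → OneStep R t u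

def Unifies (σ : Nat → Term F) (s t : Term F) : Prop := s.subst σ = t.subst σ

def IsMGU (σ : Nat → Term F) (s t : Term F) : Prop :=
  Unifies σ s t ∧ ∀ τ, Unifies τ s t → ∃ δ, ∀ x, τ x = (σ x).subst δ

def IsRenaming (ρ : Nat → Term F) : Prop :=
  ∃ f : Nat → Nat, Function.Injective f ∧ ∀ n, ρ n = Term.var (f n)

/-- Redundancy criterion for an oriented equation `e` whose right-hand side is
reachable from its left-hand side: some proper subterm of the lhs is reducible. -/
def Redundant (R : TRS F) (e : Rule F) : Prop :=
  ∃ p u, p ≠ ([] : List Nat) ∧ SubtermAt e.1 p u ∧ ¬ NormalForm R u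

/-- `R₁ ↝ R₂`: forward overlaps of rules of `R₂` (renamed apart) into
right-hand sides of rules of `R₁`, at non-variable positions, via an mgu. -/
def FStep (R₁ R₂ : TRS F) : TRS F :=
  { e | ∃ (l₁ r₁ l₂ r₂ : Term F) (ρ : Nat → Term F) (p : List Nat) (u : Term F)
          (σ : Nat → Term F) (r₁' : Term F),
      (l₁, r₁) ∈ R₁ ∧ (l₂, r₂) ∈ R₂ ∧ IsRenaming ρ ∧
      SubtermAt r₁ p u ∧ ¬ u.IsVar ∧ IsMGU σ u (l₂.subst ρ) ∧
      ReplaceAt r₁ p (r₂.subst ρ) r₁' ∧ e = (l₁.subst σ, r₁'.subst σ) }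

def FCiter (R : TRS F) : Nat → TRS F
  | 0 => R
  | k + 1 => FCiter R k ∪ { e | e ∈ FStep (FCiter R k) R ∧ ¬ Redundant (FCiter R k) e }

def FCinf (R : TRS F) : TRS F := ⋃ k, FCiter R k

/-- Forward-closed, via the forward-closure construction: `FC(R) = R`. -/
def ForwardClosedFC (R : TRS F) : Prop := FCinf R = R

/-- `RHS(R)`: `R` together with the conclusions of right-hand-side critical
pair inferences (second rule renamed apart). -/
def RHSset (R : TRS F) : TRS F :=
  R ∪ { e | ∃ (s t u₀ v₀ : Term F) (ρ σ : Nat → Term F), (s, t) ∈ R ∧ (u₀, v₀) ∈ R ∧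
        IsRenaming ρ ∧ IsMGU σ t (v₀.subst ρ) ∧
        s.subst σ ≠ (u₀.subst ρ).subst σ ∧ e = (s.subst σ, (u₀.subst ρ).subst σ) }

/-- the (unordered) pairs of root symbols of two equations coincide -/
def RootPairSimilar (e₁ e₂ : Rule F) : Prop :=
  (e₁.1.root = e₂.1.root ∧ e₁.2.root = e₂.2.root) ∨
  (e₁.1.root = e₂.2.root ∧ e₁.2.root = e₂.1.root)

def QuasiDet (E : TRS F) : Prop :=
  (∀ e ∈ E, ¬ e.1.IsVar ∧ ¬ e.2.IsVar) ∧
  (∀ e ∈ E, e.1.root ≠ e.2.root) ∧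
  (∀ e₁ ∈ E, ∀ e₂ ∈ E, e₁ ≠ e₂ → ¬ RootPairSimilar e₁ e₂)

def HasRootPairRepetition (E : TRS F) : Prop :=
  ∃ e₁ ∈ E, ∃ e₂ ∈ E, e₁ ≠ e₂ ∧ RootPairSimilar e₁ e₂

def VarPreserving (R : TRS F) : Prop :=
  ∀ e ∈ R, ∀ n, n ∈ Term.varsL e.1 ↔ n ∈ Term.varsL e.2

def RightReduced (R : TRS F) : Prop := ∀ e ∈ R, NormalForm R e.2

def AlmostLeftReduced (R : TRS F) : Prop :=
  ¬ ∃ (l₁ r₁ l₂ r₂ : Term F) (p : List Nat) (u : Term F) (σ : Nat → Term F),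
      (l₁, r₁) ∈ R ∧ (l₂, r₂) ∈ R ∧ p ≠ [] ∧ SubtermAt l₁ p u ∧ u = l₂.subst σ

def NonSubtermCollapsing (R : TRS F) : Prop :=
  ¬ ∃ (t u : Term F) (p : List Nat), p ≠ [] ∧ SubtermAt u p t ∧ Conv R t u

structure LMSystem (R : TRS F) : Prop where
  convergent : Convergent R
  almostLeftReduced : AlmostLeftReduced R
  rightReduced : RightReduced R
  nonCollapsing : NonSubtermCollapsing R
  forwardClosed : FCclosed R
  quasiDet : QuasiDet (RHSset R)

/-- the symbol (function symbol or variable) of a term at a position, if defined -/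
def labelAt {F : Type} : List Nat → Term F → Option (F ⊕ Nat)
  | [], t => some t.label
  | i :: p, Term.app _ ts => (ts[i]?).bind (labelAt p)
  | _ :: _, Term.var _ => none

/-- outermost distinguishing position -/
def ODP (s t : Term F) (p : List Nat) : Prop :=
  (labelAt p s ≠ none ∨ labelAt p t ≠ none) ∧
  labelAt p s ≠ labelAt p t ∧
  ∀ q, q <+: p → q ≠ p → labelAt q s = labelAt q t

/-!
A root step turns a term with root `f` into one whose root is the root `g ≠ f` of a rule's
right-hand side. In an LM-system the normal form `N` of the result keeps the root `g`: by forward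
closure, a normal form with another root is the instance of the right-hand side of a rule whose
left-hand side has root `g` (normalise the arguments, then one root step reaches `N`). If that
right-hand side has root `f`, the rule is the applied one read backwards; otherwise the
left-hand side `f(…)` of the applied step also reaches `N` through a rule, and the two
right-hand sides overlap at the root. The resulting right-hand-side critical pair has the same
root pair as the applied rule, so by quasi-determinism it is that rule, whose right-hand side
would then be reducible. Both contradict the assumptions.

So along `f(ss) →* f(ts)` the first root step fixes the root of the common normal form to some
`g ≠ f`, and the root step that must later leave `g` to return to `f` yields a term whose
normal form has a root other than `g`. Without root steps the reduction acts argumentwise.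
-/

namespace Term

@[induction_eliminator]
theorem induction {P : Term F → Prop} (var : ∀ n, P (var n))
    (app : ∀ f ts, (∀ t ∈ ts, P t) → P (app f ts)) (t : Term F) : P t :=
  Term.rec (motive_2 := fun ts => ∀ t ∈ ts, P t) var app
    (fun _ h => absurd h List.not_mem_nil)
    (fun _ _ ht hts _ h => (List.mem_cons.1 h).elim (· ▸ ht) (hts _)) t

def size : Term F → Nat
  | var _ => 1
  | app _ ts => 1 + (ts.map size).sum

@[simp] theorem subst_var (σ : Nat → Term F) (n : Nat) : (var n).subst σ = σ n := by
  rw [subst]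

@[simp] theorem subst_app (σ : Nat → Term F) (f : F) (ts : List (Term F)) :
    (app f ts).subst σ = app f (ts.map (subst σ)) := by
  rw [subst, List.attach_map_val (f := subst σ)]

@[simp] theorem varsL_var (n : Nat) : (var n : Term F).varsL = [n] := by
  rw [varsL]

@[simp] theorem varsL_app (f : F) (ts : List (Term F)) :
    (app f ts).varsL = (ts.map varsL).flatten := by
  rw [varsL, List.attach_map_val (f := varsL)]

theorem mem_varsL_app {f : F} {ts : List (Term F)} {x : Nat} :
    x ∈ (app f ts).varsL ↔ ∃ t ∈ ts, x ∈ t.varsL := by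
  simp

@[simp] theorem root_app (f : F) (ts : List (Term F)) : (app f ts).root = some f := rfl

theorem subst_subst (σ τ : Nat → Term F) (t : Term F) :
    (t.subst σ).subst τ = t.subst fun x => (σ x).subst τ := by
  induction t with
  | var n => simp
  | app f ts ih => simpa using ih

theorem subst_congr {σ τ : Nat → Term F} {t : Term F} (h : ∀ x ∈ t.varsL, σ x = τ x) :
    t.subst σ = t.subst τ := by
  induction t with
  | var n => simpa using h
  | app f ts ih =>
    simp only [subst_app, app.injEq, true_and]
    exact List.map_congr_left fun t ht => ih t ht fun x hx => h x (mem_varsL_app.2 ⟨t, ht, hx⟩)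

@[simp] theorem subst_id (t : Term F) : t.subst var = t := by
  induction t with
  | var n => simp
  | app f ts ih => simp [List.map_congr_left ih]

theorem mem_varsL_subst {σ : Nat → Term F} {t : Term F} {y : Nat} :
    y ∈ (t.subst σ).varsL ↔ ∃ x ∈ t.varsL, y ∈ (σ x).varsL := by
  induction t with
  | var n => simp
  | app f ts ih =>
    simp only [subst_app, mem_varsL_app, List.mem_map, exists_exists_and_eq_and]
    constructor
    · rintro ⟨t, ht, hy⟩
      obtain ⟨x, hx, hxy⟩ := (ih t ht).1 hy
      exact ⟨x, ⟨t, ht, hx⟩, hxy⟩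
    · rintro ⟨x, ⟨t, ht, hx⟩, hxy⟩
      exact ⟨t, ht, (ih t ht).2 ⟨x, hx, hxy⟩⟩

theorem mem_varsL_subst_update {x y : Nat} {c t : Term F}
    (h : y ∈ (t.subst (Function.update var x c)).varsL) :
    y ∈ c.varsL ∨ y ∈ t.varsL ∧ y ≠ x := by
  obtain ⟨z, hz, hy⟩ := mem_varsL_subst.1 h
  by_cases hzx : z = x
  · subst hzx
    simp only [Function.update_self] at hy
    exact Or.inl hy
  · simp only [Function.update_of_ne hzx, varsL_var, List.mem_singleton] at hy
    subst hy
    exact Or.inr ⟨hz, hzx⟩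

theorem exists_eq_app_of_not_isVar {t : Term F} (h : ¬ t.IsVar) : ∃ f ts, t = app f ts := by
  cases t with
  | var n => exact absurd trivial h
  | app f ts => exact ⟨f, ts, rfl⟩

theorem root_subst {t : Term F} (ht : ¬ t.IsVar) (σ : Nat → Term F) :
    (t.subst σ).root = t.root := by
  cases t with
  | var n => exact absurd trivial ht
  | app f ts => simp

theorem size_lt_of_mem {t : Term F} {f : F} {ts : List (Term F)} (h : t ∈ ts) :
    t.size < (app f ts).size := by
  have := List.le_sum_of_mem (List.mem_map_of_mem (f := size) h)
  rw [size]
  omega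

theorem size_le_size_subst {σ : Nat → Term F} {t : Term F} {x : Nat} (hx : x ∈ t.varsL) :
    (σ x).size ≤ (t.subst σ).size := by
  induction t with
  | var n => simp_all
  | app f ts ih =>
    obtain ⟨t, ht, hx⟩ := mem_varsL_app.1 hx
    rw [subst_app]
    exact (ih t ht hx).trans (size_lt_of_mem (f := f) (List.mem_map_of_mem ht)).le

theorem not_mem_varsL_of_subst_eq {σ : Nat → Term F} {x : Nat} {c : Term F}
    (hc : c ≠ var x) (h : σ x = c.subst σ) : x ∉ c.varsL := by
  intro hx
  cases c with
  | var n => simp_all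
  | app f ts =>
    obtain ⟨t, ht, hx⟩ := mem_varsL_app.1 hx
    have := (size_le_size_subst (σ := σ) hx).trans_lt
      (size_lt_of_mem (f := f) (List.mem_map_of_mem ht))
    rw [← subst_app, ← h] at this
    exact this.false

end Term

open Term

def UnifiesAll (σ : Nat → Term F) (ps : List (Term F × Term F)) : Prop :=
  ∀ p ∈ ps, p.1.subst σ = p.2.subst σ

def IsMGUAll (σ : Nat → Term F) (ps : List (Term F × Term F)) : Prop :=
  UnifiesAll σ ps ∧ ∀ τ, UnifiesAll τ ps → ∃ δ, ∀ x, τ x = (σ x).subst δ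

def substPairs (σ : Nat → Term F) (ps : List (Term F × Term F)) : List (Term F × Term F) :=
  ps.map (Prod.map (subst σ) (subst σ))

def varsPairs (ps : List (Term F × Term F)) : Finset Nat :=
  (ps.flatMap fun p => p.1.varsL ++ p.2.varsL).toFinset

def sizePairs (ps : List (Term F × Term F)) : Nat :=
  (ps.map fun p => p.1.size + p.2.size).sum

section Unification

variable {σ τ : Nat → Term F} {ps qs : List (Term F × Term F)}

theorem unifiesAll_cons {p : Term F × Term F} :
    UnifiesAll σ (p :: ps) ↔ p.1.subst σ = p.2.subst σ ∧ UnifiesAll σ ps :=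
  List.forall_mem_cons

theorem unifiesAll_cons_swap {a b : Term F} :
    UnifiesAll σ ((a, b) :: ps) ↔ UnifiesAll σ ((b, a) :: ps) := by
  simp only [unifiesAll_cons, eq_comm]

theorem unifiesAll_substPairs :
    UnifiesAll τ (substPairs σ ps) ↔ UnifiesAll (fun x => (σ x).subst τ) ps := by
  simp only [UnifiesAll, substPairs, List.forall_mem_map, Prod.map_fst, Prod.map_snd, subst_subst]

theorem unifiesAll_app_cons {f : F} {as bs : List (Term F)} (h : as.length = bs.length) :
    UnifiesAll σ ((app f as, app f bs) :: ps) ↔ UnifiesAll σ (as.zip bs ++ ps) := by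
  have : as.map (subst σ) = bs.map (subst σ) ↔
      ∀ p ∈ as.zip bs, p.1.subst σ = p.2.subst σ := by
    rw [← List.forall₂_eq_eq_eq, List.forall₂_map_left_iff, List.forall₂_map_right_iff,
      List.forall₂_iff_zip]
    simp [h]
  simp [UnifiesAll, this, or_imp, forall_and]

theorem isMGUAll_congr (h : ∀ τ, UnifiesAll τ ps ↔ UnifiesAll τ qs) :
    IsMGUAll σ ps ↔ IsMGUAll σ qs := by
  simp only [IsMGUAll, h]

theorem subst_update_var {x : Nat} {c : Term F} (h : τ x = c.subst τ) (z : Nat) :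
    (Function.update var x c z).subst τ = τ z := by
  by_cases hz : z = x
  · subst hz; simp [h]
  · simp [hz]

theorem subst_update_var_of_not_mem {x : Nat} {c t : Term F} (hx : x ∉ t.varsL) :
    t.subst (Function.update var x c) = t := by
  conv_rhs => rw [← subst_id t]
  exact subst_congr fun z hz => Function.update_of_ne (by rintro rfl; exact hx hz) _ _

theorem IsMGUAll.var_cons {x : Nat} {c : Term F} (hx : x ∉ c.varsL)
    (hσ : IsMGUAll σ (substPairs (Function.update var x c) ps)) :
    IsMGUAll (fun z => (Function.update var x c z).subst σ) ((var x, c) :: ps) := by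
  refine ⟨unifiesAll_cons.2 ⟨?_, unifiesAll_substPairs.1 hσ.1⟩, fun τ hτ => ?_⟩
  · rw [subst_var, ← subst_subst, subst_update_var_of_not_mem hx, Function.update_self]
  obtain ⟨hxτ, hτ⟩ := unifiesAll_cons.1 hτ
  rw [subst_var] at hxτ
  have hτ' : UnifiesAll τ (substPairs (Function.update var x c) ps) := by
    rw [unifiesAll_substPairs]
    simpa only [subst_update_var hxτ] using hτ
  obtain ⟨δ, hδ⟩ := hσ.2 τ hτ'
  refine ⟨δ, fun z => ?_⟩
  rw [subst_subst, ← subst_update_var (c := c) hxτ z]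
  exact subst_congr fun y _ => hδ y

theorem mem_varsPairs {y : Nat} :
    y ∈ varsPairs ps ↔ ∃ p ∈ ps, y ∈ p.1.varsL ∨ y ∈ p.2.varsL := by
  simp [varsPairs]

theorem varsPairs_cons_swap {a b : Term F} :
    varsPairs ((a, b) :: ps) = varsPairs ((b, a) :: ps) := by
  ext y
  simp [mem_varsPairs, or_comm]

theorem varsPairs_subset_cons {p : Term F × Term F} : varsPairs ps ⊆ varsPairs (p :: ps) := by
  intro y hy
  obtain ⟨q, hq, hy⟩ := mem_varsPairs.1 hy
  exact mem_varsPairs.2 ⟨q, List.mem_cons_of_mem _ hq, hy⟩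

theorem sizePairs_lt_cons {p : Term F × Term F} : sizePairs ps < sizePairs (p :: ps) := by
  have : 0 < p.1.size := by cases p.1 <;> simp [size]
  simp only [sizePairs, List.map_cons, List.sum_cons]
  omega

theorem card_varsPairs_substPairs_lt {x : Nat} {c : Term F} (hx : x ∉ c.varsL) :
    (varsPairs (substPairs (Function.update var x c) ps)).card <
      (varsPairs ((var x, c) :: ps)).card := by
  have hsub :
      varsPairs (substPairs (Function.update var x c) ps) ⊆
        (varsPairs ((var x, c) :: ps)).erase x := by
    intro y hy
    obtain ⟨_, hq', hy⟩ := mem_varsPairs.1 hy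
    obtain ⟨q, hq, rfl⟩ := List.mem_map.1 hq'
    have hc : y ∈ c.varsL → y ∈ (varsPairs ((var x, c) :: ps)).erase x := fun h =>
      Finset.mem_erase.2
        ⟨by rintro rfl; exact hx h, mem_varsPairs.2 ⟨_, List.mem_cons_self, Or.inr h⟩⟩
    have hq : y ∈ q.1.varsL ∨ y ∈ q.2.varsL → y ≠ x →
        y ∈ (varsPairs ((var x, c) :: ps)).erase x := fun hy hyx =>
      Finset.mem_erase.2 ⟨hyx, varsPairs_subset_cons (mem_varsPairs.2 ⟨q, hq, hy⟩)⟩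
    rcases hy.imp mem_varsL_subst_update mem_varsL_subst_update with
      (hy | ⟨hy, hyx⟩) | (hy | ⟨hy, hyx⟩)
    exacts [hc hy, hq (.inl hy) hyx, hc hy, hq (.inr hy) hyx]
  exact (Finset.card_le_card hsub).trans_lt
    (Finset.card_erase_lt_of_mem (mem_varsPairs.2 ⟨_, List.mem_cons_self, Or.inl (by simp)⟩))

theorem varsPairs_zip_append_subset {f g : F} {as bs : List (Term F)} :
    varsPairs (as.zip bs ++ ps) ⊆ varsPairs ((app f as, app g bs) :: ps) := by
  intro y hy
  obtain ⟨q, hq, hy⟩ := mem_varsPairs.1 hy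
  rcases List.mem_append.1 hq with hq | hq
  · have ⟨ha, hb⟩ := List.of_mem_zip hq
    refine mem_varsPairs.2 ⟨_, List.mem_cons_self, ?_⟩
    exact hy.imp (fun hy => mem_varsL_app.2 ⟨_, ha, hy⟩)
      (fun hy => mem_varsL_app.2 ⟨_, hb, hy⟩)
  · exact varsPairs_subset_cons (mem_varsPairs.2 ⟨q, hq, hy⟩)

theorem sizePairs_zip_le : ∀ as bs : List (Term F),
    sizePairs (as.zip bs) ≤ (as.map size).sum + (bs.map size).sum
  | [], _ => by simp [sizePairs]
  | _ :: _, [] => by simp [sizePairs]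
  | a :: as, b :: bs => by
    have := sizePairs_zip_le as bs
    simp only [sizePairs, List.zip_cons_cons, List.map_cons, List.sum_cons] at *
    omega

theorem sizePairs_zip_append_lt {f g : F} {as bs : List (Term F)} :
    sizePairs (as.zip bs ++ ps) < sizePairs ((app f as, app g bs) :: ps) := by
  have := sizePairs_zip_le as bs
  simp only [sizePairs, List.map_append, List.sum_append, List.map_cons, List.sum_cons, size] at *
  omega

theorem exists_isMGUAll_var_cons {μ : Nat → Term F} {x : Nat} {c : Term F} (hc : c ≠ var x)
    (hμ : UnifiesAll μ ((var x, c) :: ps))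
    (ih : x ∉ c.varsL → (∃ μ, UnifiesAll μ (substPairs (Function.update var x c) ps)) →
      ∃ σ, IsMGUAll σ (substPairs (Function.update var x c) ps)) :
    ∃ σ, IsMGUAll σ ((var x, c) :: ps) := by
  -- `ih` may assume the occurs check, which is what makes the recursive call in
  -- `exists_isMGUAll` decrease
  obtain ⟨hxc, hμ⟩ := unifiesAll_cons.1 hμ
  rw [subst_var] at hxc
  have hx := not_mem_varsL_of_subst_eq hc hxc
  have hμ' : UnifiesAll μ (substPairs (Function.update var x c) ps) := by
    rw [unifiesAll_substPairs]
    simpa only [subst_update_var hxc] using hμ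
  obtain ⟨σ, hσ⟩ := ih hx ⟨μ, hμ'⟩
  exact ⟨_, hσ.var_cons hx⟩

/-- Martelli–Montanari unification; each transformation decreases the number of variables, or
leaves it unchanged and decreases the total size. -/
theorem exists_isMGUAll : ∀ ps : List (Term F × Term F), (∃ μ, UnifiesAll μ ps) →
    ∃ σ, IsMGUAll σ ps
  | [], _ => ⟨var, fun _ h => absurd h List.not_mem_nil, fun τ _ => ⟨τ, fun x => by simp⟩⟩
  | (a, b) :: ps, ⟨μ, hμ⟩ => by
    by_cases hab : a = b
    · subst hab
      obtain ⟨σ, hσ⟩ := exists_isMGUAll ps ⟨μ, (unifiesAll_cons.1 hμ).2⟩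
      exact ⟨σ, (isMGUAll_congr fun τ => by simp [unifiesAll_cons]).2 hσ⟩
    match a, b, hab, hμ with
    | var x, c, hab, hμ =>
      exact exists_isMGUAll_var_cons (Ne.symm hab) hμ fun _ => exists_isMGUAll _
    | app f as, var x, _, hμ =>
      obtain ⟨σ, hσ⟩ := exists_isMGUAll_var_cons (by simp) (unifiesAll_cons_swap.1 hμ)
        fun _ => exists_isMGUAll _
      exact ⟨σ, (isMGUAll_congr fun τ => unifiesAll_cons_swap).2 hσ⟩
    | app f as, app g bs, _, hμ =>
      have hhead := (unifiesAll_cons.1 hμ).1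
      simp only [subst_app, app.injEq] at hhead
      obtain ⟨rfl, hmap⟩ := hhead
      have hlen : as.length = bs.length := by simpa using congrArg List.length hmap
      obtain ⟨σ, hσ⟩ :=
        exists_isMGUAll (as.zip bs ++ ps) ⟨μ, (unifiesAll_app_cons hlen).1 hμ⟩
      exact ⟨σ, (isMGUAll_congr fun τ => unifiesAll_app_cons hlen).2 hσ⟩
termination_by ps => ((varsPairs ps).card, sizePairs ps)
decreasing_by
  · subst hab
    exact Prod.Lex.toLex_strictMono
      (Prod.mk_lt_mk_of_le_of_lt (Finset.card_le_card varsPairs_subset_cons) sizePairs_lt_cons)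
  · exact Prod.Lex.left _ _ (card_varsPairs_substPairs_lt ‹_›)
  · exact Prod.Lex.left _ _ (varsPairs_cons_swap ▸ card_varsPairs_substPairs_lt ‹_›)
  · exact Prod.Lex.toLex_strictMono (Prod.mk_lt_mk_of_le_of_lt
      (Finset.card_le_card varsPairs_zip_append_subset) sizePairs_zip_append_lt)

end Unification

theorem exists_isMGU {s t : Term F} (h : ∃ μ, Unifies μ s t) : ∃ σ, IsMGU σ s t := by
  have hsingle : ∀ μ, UnifiesAll μ [(s, t)] ↔ Unifies μ s t := by simp [UnifiesAll, Unifies]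
  obtain ⟨σ, hσ, hmgu⟩ := exists_isMGUAll [(s, t)] (by simpa only [hsingle] using h)
  exact ⟨σ, (hsingle σ).1 hσ, fun τ hτ => hmgu τ ((hsingle τ).2 hτ)⟩

/-- Renaming `v` apart from `t` by shifting its variables past those of `t`. -/
theorem exists_renaming_apart (t v : Term F) (τ₁ τ₂ : Nat → Term F) :
    ∃ ρ μ, IsRenaming ρ ∧ t.subst μ = t.subst τ₁ ∧
      (v.subst ρ).subst μ = v.subst τ₂ := by
  set M := t.varsL.sum + 1
  refine ⟨fun n => var (n + M), fun z => if z < M then τ₁ z else τ₂ (z - M),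
    ⟨(· + M), add_left_injective M, fun _ => rfl⟩, ?_, ?_⟩
  · exact subst_congr fun z hz => if_pos (Nat.lt_succ_of_le (List.le_sum_of_mem hz))
  · rw [subst_subst]
    exact subst_congr fun z _ => by simp

theorem exists_mem_RHSset {R : TRS F} {e e' : Rule F} (he : e ∈ R) (he' : e' ∈ R)
    (hl : ¬ e.1.IsVar) (hl' : ¬ e'.1.IsVar) (hroot : e.1.root ≠ e'.1.root)
    {τ τ' : Nat → Term F} (h : e.2.subst τ = e'.2.subst τ') :
    ∃ σ σ', (e.1.subst σ, e'.1.subst σ') ∈ RHSset R := by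
  obtain ⟨ρ, μ, hρ, hμ, hμ'⟩ := exists_renaming_apart e.2 e'.2 τ τ'
  obtain ⟨σ, hσ⟩ :=
    exists_isMGU (s := e.2) (t := e'.2.subst ρ) ⟨μ, by rw [Unifies, hμ, hμ', h]⟩
  have hne : e.1.subst σ ≠ (e'.1.subst ρ).subst σ := fun heq => hroot <| by
    rw [← root_subst hl σ, heq, subst_subst, root_subst hl']
  exact ⟨σ, fun z => (ρ z).subst σ,
    Or.inr ⟨_, _, _, _, ρ, σ, he, he', hρ, hσ, hne, by rw [subst_subst]⟩⟩

theorem SubtermAt.trans {t u v : Term F} {p q : List Nat} (h : SubtermAt t p u)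
    (h' : SubtermAt u q v) : SubtermAt t (p ++ q) v := by
  induction h with
  | here => exact h'
  | there hget _ ih => exact .there hget (ih h')

theorem SubtermAt.exists_replaceAt {t u v w : Term F} {p q : List Nat} (h : SubtermAt t p u)
    (h' : ReplaceAt u q v w) : ∃ t', ReplaceAt t (p ++ q) v t' := by
  induction h with
  | here => exact ⟨_, h'⟩
  | there hget _ ih =>
    obtain ⟨t', ht'⟩ := ih h'
    exact ⟨_, .there hget ht'⟩

section Rewriting

variable {R : TRS F}

theorem NormalForm.subtermAt {t u : Term F} {p : List Nat} (ht : NormalForm R t)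
    (h : SubtermAt t p u) : NormalForm R u := by
  rintro u' ⟨ρ, hρ, σ, q, hsub, hrep⟩
  obtain ⟨t', ht'⟩ := h.exists_replaceAt hrep
  exact ht t' ⟨ρ, hρ, σ, p ++ q, h.trans hsub, ht'⟩

theorem RootStep.oneStep {s t : Term F} (h : RootStep R s t) : OneStep R s t := by
  obtain ⟨ρ, hρ, σ, rfl, rfl⟩ := h
  exact ⟨ρ, hρ, σ, [], .here _, .here _ _⟩

def ArgStep (R : TRS F) (s t : Term F) : Prop :=
  ∃ f ts i u w, s = app f ts ∧ ts[i]? = some u ∧ OneStep R u w ∧ t = app f (ts.set i w)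

theorem ArgStep.oneStep {s t : Term F} (h : ArgStep R s t) : OneStep R s t := by
  obtain ⟨f, ts, i, u, w, rfl, hget, ⟨ρ, hρ, σ, q, hsub, hrep⟩, rfl⟩ := h
  exact ⟨ρ, hρ, σ, i :: q, .there hget hsub, .there hget hrep⟩

theorem ArgStep.root_eq {s t : Term F} (h : ArgStep R s t) : s.root = t.root := by
  obtain ⟨f, ts, i, u, w, rfl, -, -, rfl⟩ := h
  rfl

theorem OneStep.rootStep_or_argStep {s t : Term F} (h : OneStep R s t) :
    RootStep R s t ∨ ArgStep R s t := by
  obtain ⟨ρ, hρ, σ, p, hsub, hrep⟩ := h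
  generalize hl : ρ.1.subst σ = l at hsub
  generalize hr : ρ.2.subst σ = r at hrep
  cases hsub with
  | here => cases hrep; exact .inl ⟨ρ, hρ, σ, hl.symm, hr.symm⟩
  | there hget hsub =>
    rcases hrep with _ | ⟨hget', hrep⟩
    cases hget.symm.trans hget'
    exact .inr ⟨_, _, _, _, _, rfl, hget, ⟨ρ, hρ, σ, _, hl ▸ hsub, hr ▸ hrep⟩, rfl⟩

theorem OneStep.app_append {u w : Term F} (h : OneStep R u w) (f : F) (xs ys : List (Term F)) :
    OneStep R (app f (xs ++ u :: ys)) (app f (xs ++ w :: ys)) :=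
  ArgStep.oneStep ⟨f, _, xs.length, u, w, rfl, by simp, h, by simp⟩

theorem StarRW.app_append {f : F} {ss ts : List (Term F)} (h : List.Forall₂ (StarRW R) ss ts)
    (xs : List (Term F)) : StarRW R (app f (xs ++ ss)) (app f (xs ++ ts)) := by
  induction h generalizing xs with
  | nil => exact .refl
  | @cons s t ss ts hst _ ih =>
    have hrest : StarRW R (app f (xs ++ t :: ss)) (app f (xs ++ t :: ts)) := by
      simpa using ih (xs ++ [t])
    have hhead : StarRW R (app f (xs ++ s :: ss)) (app f (xs ++ t :: ss)) :=
      Relation.ReflTransGen.lift (fun x => app f (xs ++ x :: ss))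
        (fun _ _ h => h.app_append f xs ss) _ _ hst
    exact hhead.trans hrest

theorem StarRW.app {f : F} {ss ts : List (Term F)} (h : List.Forall₂ (StarRW R) ss ts) :
    StarRW R (app f ss) (app f ts) :=
  StarRW.app_append h []

theorem exists_rootStep_of_root_ne {s t : Term F} (h : StarRW R s t) (hne : s.root ≠ t.root) :
    ∃ u v, StarRW R s u ∧ u.root = s.root ∧ RootStep R u v ∧ StarRW R v t := by
  induction h using Relation.ReflTransGen.head_induction_on with
  | refl => exact absurd rfl hne
  | @head s s' hstep hrest ih =>
    rcases hstep.rootStep_or_argStep with hroot | harg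
    · exact ⟨s, s', .refl, rfl, hroot, hrest⟩
    · obtain ⟨u, v, hs'u, hu, huv, hvt⟩ := ih (harg.root_eq ▸ hne)
      exact ⟨u, v, .head hstep hs'u, hu.trans harg.root_eq.symm, huv, hvt⟩

theorem exists_first_rootStep {s u v t : Term F} (hsu : StarRW R s u) (huv : RootStep R u v)
    (hvt : StarRW R v t) :
    ∃ u' v', StarRW R s u' ∧ u'.root = s.root ∧ RootStep R u' v' ∧ StarRW R v' t := by
  by_cases hu : u.root = s.root
  · exact ⟨u, v, hsu, hu, huv, hvt⟩
  obtain ⟨u', v', hsu', hu', hu'v', hv'u⟩ := exists_rootStep_of_root_ne hsu (Ne.symm hu)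
  exact ⟨u', v', hsu', hu', hu'v', (hv'u.tail huv.oneStep).trans hvt⟩

theorem List.forall₂_of_forall₂_set {α : Type*} {r : α → α → Prop} {u w : α}
    (hr : ∀ c, r w c → r u c) :
    ∀ {as ts : List α} {i : Nat}, as[i]? = some u → List.Forall₂ r (as.set i w) ts →
      List.Forall₂ r as ts
  | [], _, _, hget, _ => by simp at hget
  | _ :: _, [], i, _, h => by cases i <;> cases h
  | _ :: _, _ :: _, 0, hget, .cons h htail => by
    cases Option.some.inj hget
    exact .cons (hr _ h) htail
  | _ :: _, _ :: _, _ + 1, hget, .cons h htail =>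
    .cons h (List.forall₂_of_forall₂_set hr hget htail)

theorem exists_nfOf (hR : Terminating R) (t : Term F) : ∃ u, NFof R t u := by
  induction t using hR.induction with
  | _ t ih =>
    by_cases ht : NormalForm R t
    · exact ⟨t, .refl, ht⟩
    obtain ⟨t', ht'⟩ := not_forall_not.1 ht
    obtain ⟨u, htu, hu⟩ := ih t' ht'
    exact ⟨u, .head ht' htu, hu⟩

theorem NormalForm.eq_of_starRW {s t : Term F} (hs : NormalForm R s) (h : StarRW R s t) :
    s = t := by
  rcases h.cases_head with h | ⟨c, hc, _⟩
  exacts [h, absurd hc (hs c)]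

theorem Confluent.nfOf_of_starRW (hR : Confluent R) {s t N : Term F} (hst : StarRW R s t)
    (hN : NFof R s N) : NFof R t N := by
  obtain ⟨u, htu, hNu⟩ := hR s t N hst hN.1
  exact ⟨hN.2.eq_of_starRW hNu ▸ htu, hN.2⟩

end Rewriting

section QuasiDet

variable {E : TRS F} {e₁ e₂ : Rule F}

theorem QuasiDet.eq_of_root_eq (hE : QuasiDet E) (h₁ : e₁ ∈ E) (h₂ : e₂ ∈ E)
    (hl : e₁.1.root = e₂.1.root) (hr : e₁.2.root = e₂.2.root) : e₁ = e₂ :=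
  by_contra fun hne => hE.2.2 e₁ h₁ e₂ h₂ hne (.inl ⟨hl, hr⟩)

theorem QuasiDet.not_root_swap (hE : QuasiDet E) (h₁ : e₁ ∈ E) (h₂ : e₂ ∈ E)
    (hl : e₁.1.root = e₂.2.root) (hr : e₁.2.root = e₂.1.root) : False := by
  by_cases he : e₁ = e₂
  · subst he
    exact hE.2.1 e₁ h₁ hl
  · exact hE.2.2 e₁ h₁ e₂ h₂ he (.inr ⟨hl, hr⟩)

end QuasiDet

namespace LMSystem

variable {R : TRS F}

theorem not_isVar (hlm : LMSystem R) {e : Rule F} (he : e ∈ R) : ¬ e.1.IsVar ∧ ¬ e.2.IsVar :=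
  hlm.quasiDet.1 e (.inl he)

/-- Normalising the arguments of `x(as)` gives either the normal form itself or, by forward
closure, an innermost redex that reaches the normal form in a single root step. -/
theorem root_of_nfOf_app (hlm : LMSystem R) {x : F} {as : List (Term F)} {N : Term F}
    (hN : NFof R (app x as) N) :
    N.root = some x ∨ ∃ e ∈ R, ∃ τ, e.1.root = some x ∧ N = e.2.subst τ := by
  choose nf hnf using exists_nfOf hlm.convergent.2
  have hargs : ∀ u ∈ as.map nf, NormalForm R u := by
    simp only [List.mem_map]
    rintro _ ⟨a, -, rfl⟩
    exact (hnf a).2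
  have hN' : NFof R (app x (as.map nf)) N := hlm.convergent.1.nfOf_of_starRW
    (StarRW.app (List.forall₂_map_right_iff.2 (List.forall₂_same.2 fun a _ => (hnf a).1))) hN
  by_cases hred : NormalForm R (app x (as.map nf))
  · exact .inl (by rw [← hred.eq_of_starRW hN'.1, root_app])
  have heps : EpsIrreducible R (app x (as.map nf)) := by
    rintro _ u (_ | ⟨hget, hsub⟩) hne
    · exact absurd rfl hne
    · exact (hargs _ (List.mem_of_getElem? hget)).subtermAt hsub
  rcases (hlm.forwardClosed _ ⟨heps, hred⟩ N hN').rootStep_or_argStep with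
    ⟨e, he, τ, hl, rfl⟩ | ⟨_, _, _, u, w, heq, hget, huw, -⟩
  · refine .inr ⟨e, he, τ, ?_, rfl⟩
    rw [← root_subst (hlm.not_isVar he).1 τ, ← hl, root_app]
  · cases heq
    exact absurd huw (hargs u (List.mem_of_getElem? hget) w)

theorem root_nfOf_of_rootStep (hlm : LMSystem R) {u v N : Term F} (huv : RootStep R u v)
    (hN : NFof R v N) : N.root = v.root := by
  have hstep := huv.oneStep
  obtain ⟨⟨l, r⟩, he, σ, rfl, rfl⟩ := huv
  obtain ⟨hl, hr⟩ := hlm.not_isVar he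
  obtain ⟨f, ls, rfl⟩ := exists_eq_app_of_not_isVar hl
  obtain ⟨g, rs, rfl⟩ := exists_eq_app_of_not_isVar hr
  have hfg : f ≠ g := fun h => hlm.quasiDet.2.1 _ (.inl he) (by simp [h])
  simp only [subst_app, root_app] at hN hstep ⊢
  rcases hlm.root_of_nfOf_app hN with hN' | ⟨e', he', τ', hl', rfl⟩
  · exact hN'
  have hNu : NFof R (app f (ls.map (subst σ))) (e'.2.subst τ') :=
    ⟨.head hstep hN.1, hN.2⟩
  exfalso
  rcases hlm.root_of_nfOf_app hNu with hN' | ⟨e'', he'', τ'', hl'', hN''⟩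
  · -- `e'` would be the rule `f(ls) → g(rs)` read backwards
    rw [root_subst (hlm.not_isVar he').2] at hN'
    exact hlm.quasiDet.not_root_swap (.inl he) (.inl he') (by simpa using hN'.symm)
      (by simpa using hl'.symm)
  · obtain ⟨σ₁, σ₂, hE⟩ := exists_mem_RHSset he'' he' (hlm.not_isVar he'').1
      (hlm.not_isVar he').1 (by rw [hl'', hl']; simpa using hfg) hN''.symm
    have heq := hlm.quasiDet.eq_of_root_eq (.inl he) hE
      (by rw [root_subst (hlm.not_isVar he'').1, hl'', root_app])
      (by rw [root_subst (hlm.not_isVar he').1, hl', root_app])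
    have hr' : app g rs = e'.1.subst σ₂ := (Prod.ext_iff.1 heq).2
    have hreducible : OneStep R (app g rs) (e'.2.subst σ₂) :=
      ⟨e', he', σ₂, [], hr' ▸ .here _, .here _ _⟩
    exact hlm.rightReduced _ he _ hreducible

theorem root_ne_of_rootStep (hlm : LMSystem R) {u v : Term F} (huv : RootStep R u v) :
    u.root ≠ v.root := by
  obtain ⟨e, he, σ, rfl, rfl⟩ := huv
  rw [root_subst (hlm.not_isVar he).1, root_subst (hlm.not_isVar he).2]
  exact hlm.quasiDet.2.1 e (.inl he)

theorem not_rootStep_of_same_root (hlm : LMSystem R) {f : F} {ss ts : List (Term F)}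
    {u v : Term F} (hsu : StarRW R (app f ss) u) (huv : RootStep R u v)
    (hvt : StarRW R v (app f ts)) : False := by
  obtain ⟨u₁, v₁, hsu₁, hu₁, hu₁v₁, hv₁t⟩ := exists_first_rootStep hsu huv hvt
  obtain ⟨N, hN⟩ := exists_nfOf hlm.convergent.2 (app f ss)
  have hsv₁ : StarRW R (app f ss) v₁ := hsu₁.tail hu₁v₁.oneStep
  have hN₁ : N.root = v₁.root := hlm.root_nfOf_of_rootStep hu₁v₁
    (hlm.convergent.1.nfOf_of_starRW hsv₁ hN)
  have hv₁f : v₁.root ≠ (app f ts).root := fun h =>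
    hlm.root_ne_of_rootStep hu₁v₁ (hu₁.trans h.symm)
  obtain ⟨u₂, v₂, hv₁u₂, hu₂, hu₂v₂, -⟩ :=
    exists_rootStep_of_root_ne hv₁t hv₁f
  have hN₂ : N.root = v₂.root := hlm.root_nfOf_of_rootStep hu₂v₂
    (hlm.convergent.1.nfOf_of_starRW ((hsv₁.trans hv₁u₂).tail hu₂v₂.oneStep) hN)
  exact hlm.root_ne_of_rootStep hu₂v₂ (hu₂.trans (hN₁.symm.trans hN₂))

theorem forall₂_of_starRW_app (hlm : LMSystem R) {f : F} {ss ts : List (Term F)}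
    (h : StarRW R (app f ss) (app f ts)) : List.Forall₂ (StarRW R) ss ts := by
  generalize hs : app f ss = s at h
  induction h using Relation.ReflTransGen.head_induction_on generalizing ss with
  | refl =>
    cases hs
    exact List.forall₂_same.2 fun _ _ => .refl
  | head hstep hrest ih =>
    subst hs
    rcases hstep.rootStep_or_argStep with hroot | ⟨_, _, i, u, w, heq, hget, huw, rfl⟩
    · exact (hlm.not_rootStep_of_same_root .refl hroot hrest).elim
    · cases heq
      exact List.forall₂_of_forall₂_set (fun _ => .head huw) hget (ih rfl)

end LMSystem

/-- in an LM-system, `f(s₁,…,sₙ) →* f(t₁,…,tₙ)` iff `sᵢ →* tᵢ` for all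
`i`; moreover no rewrite sequence between such terms contains a root rewrite step. -/
theorem same_root_reductions {F : Type} (R : TRS F) (hlm : LMSystem R)
    (f : F) (ss ts : List (Term F)) :
    (StarRW R (Term.app f ss) (Term.app f ts) ↔ List.Forall₂ (StarRW R) ss ts) ∧
    (∀ u v, StarRW R (Term.app f ss) u → RootStep R u v →
      StarRW R v (Term.app f ts) → False) :=
  ⟨⟨hlm.forall₂_of_starRW_app, StarRW.app⟩, fun _ _ => hlm.not_rootStep_of_same_root⟩
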